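/- Inversion (canonical forms): suppose Σ; · ⊢ v : B for a value v and empty context. Then: (1) if Σ ⊢ B ≤ s for a sort s, then v = c(v') for some constructor c and value v', and there exist A and t with (c : A → t) declared in Σ, Σ ⊢ t ⊑ s, and Σ; · ⊢ v' : A; (2) if Σ ⊢ B ≤ A₁ → A₂ then v = λx.e and Σ; (·, x : B₁) ⊢ e : A₂ for some B₁ with Σ ⊢ A₁ ≤ B₁; (3) if Σ ⊢ B ≤ Unit then v = (); (4) if Σ ⊢ B ≤ A₁ × A₂ then v = ⟨v₁,v₂⟩ with Σ; · ⊢ v₁ : A₁ and Σ; · ⊢ v₂ : A₂. -/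
import Mathlib


set_option maxHeartbeats 1000000

/-! ## Names -/

abbrev SortName := String
abbrev ConName := String
abbrev DataName := String
abbrev Var := String

/-! ## Types -/

inductive Ty : Type
  | unit : Ty
  | arr : Ty → Ty → Ty
  | prod : Ty → Ty → Ty
  | sort : SortName → Ty
  | inter : Ty → Ty → Ty
  deriving DecidableEq

inductive UTy : Type
  | unit : UTy
  | arr : UTy → UTy → UTy
  | prod : UTy → UTy → UTy
  | data : DataName → UTy
  deriving DecidableEq

/-! ## Signatures -/

inductive Decl : Type
  | subsort : SortName → SortName → Decl
  | con : ConName → Ty → SortName → Decl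
  deriving DecidableEq

structure Block : Type where
  sorts : List (SortName × DataName)
  decls : List Decl
  deriving DecidableEq

/-- A signature is a finite sequence of blocks (later blocks to the right). -/
abbrev Sig := List Block

def Block.domS (b : Block) : List SortName := b.sorts.map Prod.fst

def sigDom (Sgn : Sig) : List SortName := Sgn.foldr (fun b acc => b.domS ++ acc) []

def declaresSub (Sgn : Sig) (s1 s2 : SortName) : Prop :=
  ∃ b ∈ Sgn, Decl.subsort s1 s2 ∈ b.decls

def declaresCon (Sgn : Sig) (c : ConName) (A : Ty) (s : SortName) : Prop :=
  ∃ b ∈ Sgn, Decl.con c A s ∈ b.decls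

def declaresSort (Sgn : Sig) (s : SortName) (d : DataName) : Prop :=
  ∃ b ∈ Sgn, (s, d) ∈ b.sorts

/-! ## Subsorting and subtyping -/

inductive Subsort (Sgn : Sig) : SortName → SortName → Prop
  | assum {s1 s2} : declaresSub Sgn s1 s2 → Subsort Sgn s1 s2
  | refl {s} : s ∈ sigDom Sgn → Subsort Sgn s s
  | trans {s1 s2 s3} : Subsort Sgn s1 s2 → Subsort Sgn s2 s3 → Subsort Sgn s1 s3

inductive Subty (Sgn : Sig) : Ty → Ty → Prop
  | unit : Subty Sgn .unit .unit
  | prod {A1 A2 B1 B2} : Subty Sgn A1 B1 → Subty Sgn A2 B2 →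
      Subty Sgn (.prod A1 A2) (.prod B1 B2)
  | sort {s t} : Subsort Sgn s t → Subty Sgn (.sort s) (.sort t)
  | arr {A1 A2 B1 B2} : Subty Sgn B1 A1 → Subty Sgn A2 B2 →
      Subty Sgn (.arr A1 A2) (.arr B1 B2)
  | interL1 {A1 A2 B} : Subty Sgn A1 B → Subty Sgn (.inter A1 A2) B
  | interL2 {A1 A2 B} : Subty Sgn A2 B → Subty Sgn (.inter A1 A2) B
  | interR {A B1 B2} : Subty Sgn A B1 → Subty Sgn A B2 → Subty Sgn A (.inter B1 B2)

/-! ## Unrefined signature, refinement, well-formedness -/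

/-- The unrefined signature Ψ: each constructor has a unique typing c : τ → d. -/
structure UrSig : Type where
  cons : List (ConName × UTy × DataName)
  unique : ∀ c t1 d1 t2 d2, (c, t1, d1) ∈ cons → (c, t2, d2) ∈ cons → t1 = t2 ∧ d1 = d2

def UrSig.typing (Psi : UrSig) (c : ConName) (t : UTy) (d : DataName) : Prop :=
  (c, t, d) ∈ Psi.cons

inductive Refines (Sgn : Sig) : Ty → UTy → Prop
  | unit : Refines Sgn .unit .unit
  | arr {A1 A2 t1 t2} : Refines Sgn A1 t1 → Refines Sgn A2 t2 →
      Refines Sgn (.arr A1 A2) (.arr t1 t2)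
  | prod {A1 A2 t1 t2} : Refines Sgn A1 t1 → Refines Sgn A2 t2 →
      Refines Sgn (.prod A1 A2) (.prod t1 t2)
  | sort {s d} : declaresSort Sgn s d → Refines Sgn (.sort s) (.data d)
  | inter {A1 A2 t} : Refines Sgn A1 t → Refines Sgn A2 t → Refines Sgn (.inter A1 A2) t

inductive TypeWF (Sgn : Sig) : Ty → Prop
  | unit : TypeWF Sgn .unit
  | arr {A1 A2} : TypeWF Sgn A1 → TypeWF Sgn A2 → TypeWF Sgn (.arr A1 A2)
  | prod {A1 A2} : TypeWF Sgn A1 → TypeWF Sgn A2 → TypeWF Sgn (.prod A1 A2)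
  | sort {s} : s ∈ sigDom Sgn → TypeWF Sgn (.sort s)
  | inter {A1 A2 t} : TypeWF Sgn A1 → TypeWF Sgn A2 →
      Refines Sgn A1 t → Refines Sgn A2 t → TypeWF Sgn (.inter A1 A2)

/-- Σ ⊢ c : A → s contype. -/
def ConTypeWF (Psi : UrSig) (Sgn : Sig) (c : ConName) (A : Ty) (s : SortName) : Prop :=
  TypeWF Sgn A ∧ TypeWF Sgn (.sort s) ∧
    ∃ t d, Psi.typing c t d ∧ Refines Sgn (.arr A (.sort s)) (.arr t (.data d))

/-- Constructor typing Σ ⊢ c : A → s. -/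
def ConTyping (Sgn : Sig) (c : ConName) (A : Ty) (s : SortName) : Prop :=
  ∃ s', declaresCon Sgn c A s' ∧ Subsort Sgn s' s

/-! ## Signature well-formedness -/

/-- safe(Σ; blk; c : A→s at t). -/
def SafeConAt (Sgn : Sig) (blk : Block) (c : ConName) (A : Ty) (s t : SortName) : Prop :=
  ∃ A' s', declaresCon Sgn c A' s' ∧ Subsort (Sgn ++ [blk]) s' t ∧
    Subsort (Sgn ++ [blk]) s s' ∧ Subty (Sgn ++ [blk]) A A'

/-- Σ; S ⊢ K ∋ elem safe, where the block blk is S⟨K⟩. -/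
def ElemSafe (Psi : UrSig) (Sgn : Sig) (blk : Block) : Decl → Prop
  | .subsort s1 s2 =>
      (s1 ∈ sigDom Sgn ∨ s1 ∈ blk.domS) ∧ (s2 ∈ sigDom Sgn ∨ s2 ∈ blk.domS)
  | .con c A s =>
      s ∈ blk.domS ∧ ConTypeWF Psi (Sgn ++ [blk]) c A s ∧
        ∀ t ∈ sigDom Sgn, Subsort (Sgn ++ [blk]) s t → SafeConAt Sgn blk c A s t

inductive SigWF (Psi : UrSig) : Sig → Prop
  | nil : SigWF Psi []
  | block {Sgn blk} :
      SigWF Psi Sgn →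
      (∀ s ∈ blk.domS, s ∉ sigDom Sgn) →
      (∀ t1 ∈ sigDom Sgn, ∀ t2 ∈ sigDom Sgn,
        (Subsort Sgn t1 t2 ↔ Subsort (Sgn ++ [blk]) t1 t2)) →
      (∀ elem ∈ blk.decls, ElemSafe Psi Sgn blk elem) →
      SigWF Psi (Sgn ++ [blk])

/-! ## Preservation of subsorting; non-adjacency; extension -/

/-- Σ' preserves subsorting of Σ. -/
def PreservesSub (Sgn Sgn' : Sig) : Prop :=
  ∀ s ∈ sigDom Sgn, ∀ t ∈ sigDom Sgn, Subsort (Sgn ++ Sgn') s t → Subsort Sgn s t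

def Ty.sortsOf : Ty → List SortName
  | .unit => []
  | .arr A B => A.sortsOf ++ B.sortsOf
  | .prod A B => A.sortsOf ++ B.sortsOf
  | .sort s => [s]
  | .inter A B => A.sortsOf ++ B.sortsOf

def Decl.mentions : Decl → List SortName
  | .subsort s1 s2 => [s1, s2]
  | .con _ A s => A.sortsOf ++ [s]

def Block.mentions (b : Block) : List SortName :=
  b.decls.foldr (fun d acc => d.mentions ++ acc) []

def sigMentions (Sgn : Sig) : List SortName :=
  Sgn.foldr (fun b acc => b.mentions ++ acc) []

/-- Two signature parts are non-adjacent if no declaration of either mentions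
a sort declared by the other. -/
def NonAdjacent (Sg1 Sg2 : Sig) : Prop :=
  (∀ s ∈ sigMentions Sg1, s ∉ sigDom Sg2) ∧ (∀ s ∈ sigMentions Sg2, s ∉ sigDom Sg1)

/-- Σ₊ extends Σ (Σ₊ ≽ Σ): the block sequence of Σ is a subsequence of that of Σ₊. -/
def SigExtends (Sgp Sgn : Sig) : Prop := List.Sublist Sgn Sgp

/-! ## Patterns -/

inductive Pat : Type
  | wild : Pat
  | empty : Pat
  | con : ConName → Pat → Pat
  | pair : Pat → Pat → Pat
  | as_ : Var → Pat → Pat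
  | or : Pat → Pat → Pat
  | unit : Pat
  deriving DecidableEq

def Pat.boundVars : Pat → List Var
  | .wild => []
  | .empty => []
  | .unit => []
  | .con _ p => p.boundVars
  | .pair p1 p2 => p1.boundVars ++ p2.boundVars
  | .as_ x p => x :: p.boundVars
  | .or p1 p2 => p1.boundVars ++ p2.boundVars

/-- Partial pattern intersection p₁ ∩ p₂. -/
def pinter : Pat → Pat → Option Pat
  | .empty, _ => some .empty
  | p, .empty =>
      match p with
      | _ => some .empty
  | .wild, p => some p
  | p, .wild => some p
  | .or p1 p2, p => do
      let q1 ← pinter p1 p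
      let q2 ← pinter p2 p
      pure (.or q1 q2)
  | p, .or p1 p2 => do
      let q1 ← pinter p p1
      let q2 ← pinter p p2
      pure (.or q1 q2)
  | .con c1 p1, .con c2 p2 =>
      if c1 = c2 then (pinter p1 p2).map (Pat.con c1) else some .empty
  | .pair _ _, .con _ _ => some .empty
  | .con _ _, .pair _ _ => some .empty
  | .pair p11 p12, .pair p21 p22 => do
      let q1 ← pinter p11 p21
      let q2 ← pinter p12 p22
      pure (.pair q1 q2)
  | _, _ => none

/-- The constructors of Ψ other than c. -/
def otherCons (Psi : UrSig) (c : ConName) : List ConName :=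
  ((Psi.cons.map (fun x => x.1)).filter (fun c' => c' ≠ c)).dedup

/-- Pattern complement ¬p, relative to Ψ (partial). -/
def pcomp (Psi : UrSig) : Pat → Option Pat
  | .wild => some .empty
  | .empty => some .wild
  | .as_ _ p => pcomp Psi p
  | .pair p1 p2 => do
      let q1 ← pcomp Psi p1
      let q2 ← pcomp Psi p2
      pure (.or (.pair q1 .wild) (.pair .wild q2))
  | .or p1 p2 => do
      let q1 ← pcomp Psi p1
      let q2 ← pcomp Psi p2
      pinter q1 q2
  | .con c p => do
      let q ← pcomp Psi p
      pure ((otherCons Psi c).foldl (fun acc c' => Pat.or acc (Pat.con c' .wild)) (Pat.con c q))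
  | .unit => none

/-- Pattern typing Ψ ⊢ p : τ. -/
inductive PatType (Psi : UrSig) : Pat → UTy → Prop
  | wild {t} : PatType Psi .wild t
  | empty {t} : PatType Psi .empty t
  | as_ {x p t} : PatType Psi p t → PatType Psi (.as_ x p) t
  | unit : PatType Psi .unit .unit
  | or {p1 p2 t} : PatType Psi p1 t → PatType Psi p2 t → PatType Psi (.or p1 p2) t
  | pair {p1 p2 t1 t2} : PatType Psi p1 t1 → PatType Psi p2 t2 →
      PatType Psi (.pair p1 p2) (.prod t1 t2)
  | con {c p t d} : Psi.typing c t d → PatType Psi p t → PatType Psi (.con c p) (.data d)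

/-! ## Contexts and the intersect function -/

abbrev Ctx := List (Var × Ty)

/-- Membership in intersect(Σ; A; p): (Γ'; B) is a track of the intersection of A with p. -/
inductive InIntersect (Sgn : Sig) : Pat → Ty → Ctx → Ty → Prop
  | wild {A} : InIntersect Sgn .wild A [] A
  | as_ {x p A G B} : InIntersect Sgn p A G B →
      InIntersect Sgn (.as_ x p) A (G ++ [(x, B)]) B
  | or1 {p1 p2 A G B} : InIntersect Sgn p1 A G B → InIntersect Sgn (.or p1 p2) A G B
  | or2 {p1 p2 A G B} : InIntersect Sgn p2 A G B → InIntersect Sgn (.or p1 p2) A G B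
  | pair {p1 p2 A1 A2 G1 G2 B1 B2} :
      InIntersect Sgn p1 A1 G1 B1 → InIntersect Sgn p2 A2 G2 B2 →
      InIntersect Sgn (.pair p1 p2) (.prod A1 A2) (G1 ++ G2) (.prod B1 B2)
  | con {c p0 Ac sc s G B} : declaresCon Sgn c Ac sc → Subsort Sgn sc s →
      InIntersect Sgn p0 Ac G B → InIntersect Sgn (.con c p0) (.sort s) G (.sort sc)

/-- intersect(Σ; A; p), as a set of tracks. -/
def intersect (Sgn : Sig) (A : Ty) (p : Pat) : Set (Ctx × Ty) :=
  { r | InIntersect Sgn p A r.1 r.2 }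

/-- Σ ⊢ Γ₊ ≼ Γ : contexts declare the same variables in order, with pointwise subtyping. -/
def CtxStronger (Sgn : Sig) (Gp G : Ctx) : Prop :=
  List.Forall₂ (fun a b => a.1 = b.1 ∧ Subty Sgn a.2 b.2) Gp G

/-- Σ ⊢ T₊ ≤trk T. -/
def TracksStronger (Sgn : Sig) (Tp T : Set (Ctx × Ty)) : Prop :=
  ∀ r ∈ Tp, ∃ r' ∈ T, CtxStronger Sgn r.1 r'.1 ∧ Subty Sgn r.2 r'.2

/-! ## Expressions -/

mutual
inductive Exp : Type
  | var : Var → Exp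
  | lam : Var → Exp → Exp
  | app : Exp → Exp → Exp
  | pair : Exp → Exp → Exp
  | unit : Exp
  | con : ConName → Exp → Exp
  | case_ : Exp → Arms → Exp
  | declare : Sig → Exp → Exp

inductive Arms : Type
  | nil : Arms
  | cons : Pat → Exp → Arms → Arms
end

inductive IsValue : Exp → Prop
  | var {x} : IsValue (.var x)
  | lam {x e} : IsValue (.lam x e)
  | pair {v1 v2} : IsValue v1 → IsValue v2 → IsValue (.pair v1 v2)
  | unit : IsValue .unit
  | con {c v} : IsValue v → IsValue (.con c v)

/-! ## Substitution -/

mutual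
def substE (v : Exp) (x : Var) : Exp → Exp
  | .var y => if y = x then v else .var y
  | .lam y e => if y = x then .lam y e else .lam y (substE v x e)
  | .app e1 e2 => .app (substE v x e1) (substE v x e2)
  | .pair e1 e2 => .pair (substE v x e1) (substE v x e2)
  | .unit => .unit
  | .con c e => .con c (substE v x e)
  | .case_ e ms => .case_ (substE v x e) (substA v x ms)
  | .declare sg e => .declare sg (substE v x e)

def substA (v : Exp) (x : Var) : Arms → Arms
  | .nil => .nil
  | .cons p e ms =>
      .cons p (if x ∈ p.boundVars then e else substE v x e) (substA v x ms)
end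

/-- Apply a substitution θ (a list of value/variable pairs). -/
def applySubst (th : List (Var × Exp)) (e : Exp) : Exp :=
  th.foldl (fun e xv => substE xv.2 xv.1 e) e

/-! ## Pattern matching -/

inductive Matches : Pat → Exp → List (Var × Exp) → Prop
  | wild {v} : Matches .wild v []
  | as_ {x p v th} : Matches p v th → Matches (.as_ x p) v (th ++ [(x, v)])
  | or1 {p1 p2 v th} : Matches p1 v th → Matches (.or p1 p2) v th
  | or2 {p1 p2 v th} : Matches p2 v th → Matches (.or p1 p2) v th
  | con {c p v th} : Matches p v th → Matches (.con c p) (.con c v) th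
  | unit : Matches .unit .unit []
  | pair {p1 p2 v1 v2 th1 th2} : Matches p1 v1 th1 → Matches p2 v2 th2 →
      Matches (.pair p1 p2) (.pair v1 v2) (th1 ++ th2)

inductive NoMatch : Exp → Pat → Prop
  | empty {v} : NoMatch v .empty
  | as_ {v x p} : NoMatch v p → NoMatch v (.as_ x p)
  | or {v p1 p2} : NoMatch v p1 → NoMatch v p2 → NoMatch v (.or p1 p2)
  | conHead {v c p} : (∀ v', v ≠ .con c v') → NoMatch v (.con c p)
  | conInner {c v p} : NoMatch v p → NoMatch (.con c v) (.con c p)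
  | unit {v} : v ≠ .unit → NoMatch v .unit
  | pairHead {v p1 p2} : (∀ v1 v2, v ≠ .pair v1 v2) → NoMatch v (.pair p1 p2)
  | pair1 {v1 v2 p1 p2} : NoMatch v1 p1 → NoMatch (.pair v1 v2) (.pair p1 p2)
  | pair2 {v1 v2 p1 p2} : NoMatch v2 p2 → NoMatch (.pair v1 v2) (.pair p1 p2)

/-! ## Typing -/

mutual
/-- Σ; Γ ⊢ e : A (type assignment). -/
inductive HasType (Psi : UrSig) : Sig → Ctx → Exp → Ty → Prop
  | var {Sgn G x A} : (x, A) ∈ G → HasType Psi Sgn G (.var x) A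
  | sub {Sgn G e A B} : HasType Psi Sgn G e A → Subty Sgn A B → HasType Psi Sgn G e B
  | lam {Sgn G x e A B} : HasType Psi Sgn (G ++ [(x, A)]) e B →
      HasType Psi Sgn G (.lam x e) (.arr A B)
  | app {Sgn G e1 e2 A B} : HasType Psi Sgn G e1 (.arr A B) → HasType Psi Sgn G e2 A →
      HasType Psi Sgn G (.app e1 e2) B
  | inter {Sgn G v A1 A2} : IsValue v → HasType Psi Sgn G v A1 → HasType Psi Sgn G v A2 →
      HasType Psi Sgn G v (.inter A1 A2)
  | pair {Sgn G e1 e2 A1 A2} : HasType Psi Sgn G e1 A1 → HasType Psi Sgn G e2 A2 →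
      HasType Psi Sgn G (.pair e1 e2) (.prod A1 A2)
  | unit {Sgn G} : HasType Psi Sgn G .unit .unit
  | dataI {Sgn G c e A s} : ConTyping Sgn c A s → HasType Psi Sgn G e A →
      HasType Psi Sgn G (.con c e) (.sort s)
  | dataE {Sgn G e ms A B} : HasType Psi Sgn G e A → MatchType Psi Sgn G A .wild ms B →
      HasType Psi Sgn G (.case_ e ms) B
  | declare {Sgn Sg' G e B} : SigWF Psi (Sgn ++ Sg') → TypeWF Sgn B →
      HasType Psi (Sgn ++ Sg') G e B → HasType Psi Sgn G (.declare Sg' e) B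

/-- Σ; Γ; A; p ⊢ ms : D (match typing, with residual pattern p). -/
inductive MatchType (Psi : UrSig) : Sig → Ctx → Ty → Pat → Arms → Ty → Prop
  | nil {Sgn G A p D} : intersect Sgn A p = (∅ : Set (Ctx × Ty)) →
      MatchType Psi Sgn G A p .nil D
  | cons {Sgn G A p p1 e1 ms D t q np1 q'} :
      Refines Sgn A t → PatType Psi p1 t →
      pinter p p1 = some q →
      (∀ G' B, (G', B) ∈ intersect Sgn A q → HasType Psi Sgn (G ++ G') e1 D) →
      pcomp Psi p1 = some np1 →
      pinter p np1 = some q' →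
      MatchType Psi Sgn G A q' ms D →
      MatchType Psi Sgn G A p (.cons p1 e1 ms) D
end

/-- Substitution typing Σ; Γ ⊢ θ : Γ'. -/
inductive SubstType (Psi : UrSig) (Sgn : Sig) (G : Ctx) : List (Var × Exp) → Ctx → Prop
  | nil : SubstType Psi Sgn G [] []
  | cons {th G' v x A} : SubstType Psi Sgn G th G' → IsValue v → HasType Psi Sgn G v A →
      SubstType Psi Sgn G (th ++ [(x, v)]) (G' ++ [(x, A)])

/-! ## Operational semantics -/

inductive ArmsStep (v : Exp) : Arms → Exp → Prop
  | match_ {p1 e1 ms th} : Matches p1 v th → ArmsStep v (.cons p1 e1 ms) (applySubst th e1)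
  | else_ {p1 e1 ms e'} : NoMatch v p1 → ArmsStep v ms e' → ArmsStep v (.cons p1 e1 ms) e'

inductive Step : Exp → Exp → Prop
  | beta {x e v} : IsValue v → Step (.app (.lam x e) v) (substE v x e)
  | declare {sg e} : Step (.declare sg e) e
  | case_ {v ms e'} : IsValue v → ArmsStep v ms e' → Step (.case_ v ms) e'
  | appL {e1 e1' e2} : Step e1 e1' → Step (.app e1 e2) (.app e1' e2)
  | appR {v e2 e2'} : IsValue v → Step e2 e2' → Step (.app v e2) (.app v e2')
  | conArg {c e e'} : Step e e' → Step (.con c e) (.con c e')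
  | pairL {e1 e1' e2} : Step e1 e1' → Step (.pair e1 e2) (.pair e1' e2)
  | pairR {v e2 e2'} : IsValue v → Step e2 e2' → Step (.pair v e2) (.pair v e2')
  | caseScrut {e e' ms} : Step e e' → Step (.case_ e ms) (.case_ e' ms)

/-! ## Typing derivations in which every type is well-formed under the local signature -/

mutual
inductive HasTypeW (Psi : UrSig) : Sig → Ctx → Exp → Ty → Prop
  | var {Sgn G x A} : (x, A) ∈ G → TypeWF Sgn A → HasTypeW Psi Sgn G (.var x) A
  | sub {Sgn G e A B} : HasTypeW Psi Sgn G e A → Subty Sgn A B → TypeWF Sgn B →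
      HasTypeW Psi Sgn G e B
  | lam {Sgn G x e A B} : TypeWF Sgn (.arr A B) → HasTypeW Psi Sgn (G ++ [(x, A)]) e B →
      HasTypeW Psi Sgn G (.lam x e) (.arr A B)
  | app {Sgn G e1 e2 A B} : HasTypeW Psi Sgn G e1 (.arr A B) → HasTypeW Psi Sgn G e2 A →
      HasTypeW Psi Sgn G (.app e1 e2) B
  | inter {Sgn G v A1 A2} : IsValue v → TypeWF Sgn (.inter A1 A2) →
      HasTypeW Psi Sgn G v A1 → HasTypeW Psi Sgn G v A2 →
      HasTypeW Psi Sgn G v (.inter A1 A2)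
  | pair {Sgn G e1 e2 A1 A2} : HasTypeW Psi Sgn G e1 A1 → HasTypeW Psi Sgn G e2 A2 →
      HasTypeW Psi Sgn G (.pair e1 e2) (.prod A1 A2)
  | unit {Sgn G} : HasTypeW Psi Sgn G .unit .unit
  | dataI {Sgn G c e A s} : ConTyping Sgn c A s → TypeWF Sgn A → TypeWF Sgn (.sort s) →
      HasTypeW Psi Sgn G e A → HasTypeW Psi Sgn G (.con c e) (.sort s)
  | dataE {Sgn G e ms A B} : HasTypeW Psi Sgn G e A → TypeWF Sgn A → TypeWF Sgn B →
      MatchTypeW Psi Sgn G A .wild ms B → HasTypeW Psi Sgn G (.case_ e ms) B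
  | declare {Sgn Sg' G e B} : SigWF Psi (Sgn ++ Sg') → TypeWF Sgn B →
      HasTypeW Psi (Sgn ++ Sg') G e B → HasTypeW Psi Sgn G (.declare Sg' e) B

inductive MatchTypeW (Psi : UrSig) : Sig → Ctx → Ty → Pat → Arms → Ty → Prop
  | nil {Sgn G A p D} : intersect Sgn A p = (∅ : Set (Ctx × Ty)) →
      MatchTypeW Psi Sgn G A p .nil D
  | cons {Sgn G A p p1 e1 ms D t q np1 q'} :
      Refines Sgn A t → PatType Psi p1 t →
      pinter p p1 = some q →
      (∀ G' B, (G', B) ∈ intersect Sgn A q → HasTypeW Psi Sgn (G ++ G') e1 D) →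
      pcomp Psi p1 = some np1 →
      pinter p np1 = some q' →
      MatchTypeW Psi Sgn G A q' ms D →
      MatchTypeW Psi Sgn G A p (.cons p1 e1 ms) D
end

/-! ## Annotated expressions and the bidirectional system -/

mutual
inductive AExp : Type
  | var : Var → AExp
  | lam : Var → AExp → AExp
  | app : AExp → AExp → AExp
  | pair : AExp → AExp → AExp
  | unit : AExp
  | con : ConName → AExp → AExp
  | case_ : AExp → AArms → AExp
  | declare : Sig → AExp → AExp
  | anno : AExp → List Ty → AExp

inductive AArms : Type
  | nil : AArms
  | cons : Pat → AExp → AArms → AArms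
end

inductive IsAValue : AExp → Prop
  | var {x} : IsAValue (.var x)
  | lam {x e} : IsAValue (.lam x e)
  | pair {v1 v2} : IsAValue v1 → IsAValue v2 → IsAValue (.pair v1 v2)
  | unit : IsAValue .unit
  | con {c v} : IsAValue v → IsAValue (.con c v)
  | anno {v As} : IsAValue v → IsAValue (.anno v As)

mutual
/-- |e|: erase all annotations. -/
def eraseE : AExp → Exp
  | .var x => .var x
  | .lam x e => .lam x (eraseE e)
  | .app e1 e2 => .app (eraseE e1) (eraseE e2)
  | .pair e1 e2 => .pair (eraseE e1) (eraseE e2)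
  | .unit => .unit
  | .con c e => .con c (eraseE e)
  | .case_ e ms => .case_ (eraseE e) (eraseA ms)
  | .declare sg e => .declare sg (eraseE e)
  | .anno e _ => eraseE e

def eraseA : AArms → Arms
  | .nil => .nil
  | .cons p e ms => .cons p (eraseE e) (eraseA ms)
end

mutual
/-- Σ; Γ ⊢ e ⇐ A (checking). -/
inductive Chk (Psi : UrSig) : Sig → Ctx → AExp → Ty → Prop
  | sub {Sgn G e A B} : Syn Psi Sgn G e A → Subty Sgn A B → Chk Psi Sgn G e B
  | lam {Sgn G x e A B} : Chk Psi Sgn (G ++ [(x, A)]) e B →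
      Chk Psi Sgn G (.lam x e) (.arr A B)
  | inter {Sgn G v A1 A2} : IsAValue v → Chk Psi Sgn G v A1 → Chk Psi Sgn G v A2 →
      Chk Psi Sgn G v (.inter A1 A2)
  | pair {Sgn G e1 e2 A1 A2} : Chk Psi Sgn G e1 A1 → Chk Psi Sgn G e2 A2 →
      Chk Psi Sgn G (.pair e1 e2) (.prod A1 A2)
  | unit {Sgn G} : Chk Psi Sgn G .unit .unit
  | dataI {Sgn G c e A s} : ConTyping Sgn c A s → Chk Psi Sgn G e A →
      Chk Psi Sgn G (.con c e) (.sort s)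
  | dataE {Sgn G e ms A B} : Syn Psi Sgn G e A → MatchChk Psi Sgn G A .wild ms B →
      Chk Psi Sgn G (.case_ e ms) B
  | declare {Sgn Sg' G e B} : SigWF Psi (Sgn ++ Sg') → TypeWF Sgn B →
      Chk Psi (Sgn ++ Sg') G e B → Chk Psi Sgn G (.declare Sg' e) B

/-- Σ; Γ ⊢ e ⇒ A (synthesis). -/
inductive Syn (Psi : UrSig) : Sig → Ctx → AExp → Ty → Prop
  | var {Sgn G x A} : (x, A) ∈ G → Syn Psi Sgn G (.var x) A
  | anno {Sgn G e As A} : A ∈ As → Chk Psi Sgn G e A → Syn Psi Sgn G (.anno e As) A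
  | app {Sgn G e1 e2 A B} : Syn Psi Sgn G e1 (.arr A B) → Chk Psi Sgn G e2 A →
      Syn Psi Sgn G (.app e1 e2) B
  | interE1 {Sgn G e A1 A2} : Syn Psi Sgn G e (.inter A1 A2) → Syn Psi Sgn G e A1
  | interE2 {Sgn G e A1 A2} : Syn Psi Sgn G e (.inter A1 A2) → Syn Psi Sgn G e A2

/-- Σ; Γ; A; p ⊢ ms ⇐ B (bidirectional match typing). -/
inductive MatchChk (Psi : UrSig) : Sig → Ctx → Ty → Pat → AArms → Ty → Prop
  | nil {Sgn G A p D} : intersect Sgn A p = (∅ : Set (Ctx × Ty)) →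
      MatchChk Psi Sgn G A p .nil D
  | cons {Sgn G A p p1 e1 ms D t q np1 q'} :
      Refines Sgn A t → PatType Psi p1 t →
      pinter p p1 = some q →
      (∀ G' B, (G', B) ∈ intersect Sgn A q → Chk Psi Sgn (G ++ G') e1 D) →
      pcomp Psi p1 = some np1 →
      pinter p np1 = some q' →
      MatchChk Psi Sgn G A q' ms D →
      MatchChk Psi Sgn G A p (.cons p1 e1 ms) D
end

/-! ## Auxiliary lemmas: transitivity of subtyping -/

theorem interR_inv {S : Sig} {A X : Ty} (h : Subty S A X) :
    ∀ B1 B2, X = .inter B1 B2 → Subty S A B1 ∧ Subty S A B2 := by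
  induction h with
  | unit => intro _ _ h; cases h
  | prod _ _ _ _ => intro _ _ h; cases h
  | sort _ => intro _ _ h; cases h
  | arr _ _ _ _ => intro _ _ h; cases h
  | interL1 _ ih => intro B1 B2 hX; obtain ⟨h1, h2⟩ := ih B1 B2 hX
                    exact ⟨.interL1 h1, .interL1 h2⟩
  | interL2 _ ih => intro B1 B2 hX; obtain ⟨h1, h2⟩ := ih B1 B2 hX
                    exact ⟨.interL2 h1, .interL2 h2⟩
  | interR h1 h2 _ _ => intro B1 B2 hX; cases hX; exact ⟨h1, h2⟩

theorem subty_sortR {S : Sig} {X Y : Ty} (h : Subty S X Y) :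
    ∀ s t, Y = .sort s → Subsort S s t → Subty S X (.sort t) := by
  induction h with
  | sort hst => intro s t hY h2; cases hY; exact .sort (hst.trans h2)
  | interL1 _ ih => intro s t hY h2; exact .interL1 (ih s t hY h2)
  | interL2 _ ih => intro s t hY h2; exact .interL2 (ih s t hY h2)
  | interR _ _ _ _ => intro _ _ hY _; cases hY
  | unit => intro _ _ hY _; cases hY
  | prod _ _ _ _ => intro _ _ hY _; cases hY
  | arr _ _ _ _ => intro _ _ hY _; cases hY

theorem subty_sortL {S : Sig} {X C : Ty} (h : Subty S X C) :
    ∀ s t, X = .sort t → Subsort S s t → Subty S (.sort s) C := by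
  induction h with
  | sort htu => intro s t hX h2; cases hX; exact .sort (h2.trans htu)
  | interR _ _ ih1 ih2 => intro s t hX h2; exact .interR (ih1 s t hX h2) (ih2 s t hX h2)
  | unit => intro _ _ hX _; cases hX
  | prod _ _ _ _ => intro _ _ hX _; cases hX
  | arr _ _ _ _ => intro _ _ hX _; cases hX
  | interL1 _ _ => intro _ _ hX _; cases hX
  | interL2 _ _ => intro _ _ hX _; cases hX

theorem subty_prodL {S : Sig} {X C : Ty} (h : Subty S X C) :
    ∀ A1 A2 B1 B2, X = .prod B1 B2 →
      (∀ C', Subty S B1 C' → Subty S A1 C') →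
      (∀ C', Subty S B2 C' → Subty S A2 C') →
      Subty S (.prod A1 A2) C := by
  induction h with
  | prod h1 h2 _ _ => intro A1 A2 B1 B2 hX f1 f2; cases hX; exact .prod (f1 _ h1) (f2 _ h2)
  | interR _ _ ih1 ih2 => intro A1 A2 B1 B2 hX f1 f2
                          exact .interR (ih1 _ _ _ _ hX f1 f2) (ih2 _ _ _ _ hX f1 f2)
  | unit => intro _ _ _ _ hX _ _; cases hX
  | sort _ => intro _ _ _ _ hX _ _; cases hX
  | arr _ _ _ _ => intro _ _ _ _ hX _ _; cases hX
  | interL1 _ _ => intro _ _ _ _ hX _ _; cases hX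
  | interL2 _ _ => intro _ _ _ _ hX _ _; cases hX

theorem subty_prodR {S : Sig} {C X : Ty} (h : Subty S C X) :
    ∀ A1 A2 B1 B2, X = .prod A1 A2 →
      (∀ C', Subty S C' A1 → Subty S C' B1) →
      (∀ C', Subty S C' A2 → Subty S C' B2) →
      Subty S C (.prod B1 B2) := by
  induction h with
  | prod h1 h2 _ _ => intro A1 A2 B1 B2 hX g1 g2; cases hX; exact .prod (g1 _ h1) (g2 _ h2)
  | interL1 _ ih => intro A1 A2 B1 B2 hX g1 g2; exact .interL1 (ih _ _ _ _ hX g1 g2)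
  | interL2 _ ih => intro A1 A2 B1 B2 hX g1 g2; exact .interL2 (ih _ _ _ _ hX g1 g2)
  | unit => intro _ _ _ _ hX _ _; cases hX
  | sort _ => intro _ _ _ _ hX _ _; cases hX
  | arr _ _ _ _ => intro _ _ _ _ hX _ _; cases hX
  | interR _ _ _ _ => intro _ _ _ _ hX _ _; cases hX

theorem subty_arrL {S : Sig} {X C : Ty} (h : Subty S X C) :
    ∀ A1 A2 B1 B2, X = .arr B1 B2 →
      (∀ C', Subty S C' B1 → Subty S C' A1) →
      (∀ C', Subty S B2 C' → Subty S A2 C') →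
      Subty S (.arr A1 A2) C := by
  induction h with
  | arr h1 h2 _ _ => intro A1 A2 B1 B2 hX q1 p2; cases hX; exact .arr (q1 _ h1) (p2 _ h2)
  | interR _ _ ih1 ih2 => intro A1 A2 B1 B2 hX q1 p2
                          exact .interR (ih1 _ _ _ _ hX q1 p2) (ih2 _ _ _ _ hX q1 p2)
  | unit => intro _ _ _ _ hX _ _; cases hX
  | sort _ => intro _ _ _ _ hX _ _; cases hX
  | prod _ _ _ _ => intro _ _ _ _ hX _ _; cases hX
  | interL1 _ _ => intro _ _ _ _ hX _ _; cases hX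
  | interL2 _ _ => intro _ _ _ _ hX _ _; cases hX

theorem subty_arrR {S : Sig} {C X : Ty} (h : Subty S C X) :
    ∀ A1 A2 B1 B2, X = .arr A1 A2 →
      (∀ C', Subty S A1 C' → Subty S B1 C') →
      (∀ C', Subty S C' A2 → Subty S C' B2) →
      Subty S C (.arr B1 B2) := by
  induction h with
  | arr h1 h2 _ _ => intro A1 A2 B1 B2 hX p1 q2; cases hX; exact .arr (p1 _ h1) (q2 _ h2)
  | interL1 _ ih => intro A1 A2 B1 B2 hX p1 q2; exact .interL1 (ih _ _ _ _ hX p1 q2)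
  | interL2 _ ih => intro A1 A2 B1 B2 hX p1 q2; exact .interL2 (ih _ _ _ _ hX p1 q2)
  | unit => intro _ _ _ _ hX _ _; cases hX
  | sort _ => intro _ _ _ _ hX _ _; cases hX
  | prod _ _ _ _ => intro _ _ _ _ hX _ _; cases hX
  | interR _ _ _ _ => intro _ _ _ _ hX _ _; cases hX

theorem subty_interL {S : Sig} {X C : Ty} (h : Subty S X C) :
    ∀ A B1 B2, X = .inter B1 B2 →
      (∀ C', Subty S B1 C' → Subty S A C') →
      (∀ C', Subty S B2 C' → Subty S A C') →
      Subty S A C := by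
  induction h with
  | interL1 h1 _ => intro A B1 B2 hX f1 f2; cases hX; exact f1 _ h1
  | interL2 h2 _ => intro A B1 B2 hX f1 f2; cases hX; exact f2 _ h2
  | interR _ _ ih1 ih2 => intro A B1 B2 hX f1 f2
                          exact .interR (ih1 _ _ _ hX f1 f2) (ih2 _ _ _ hX f1 f2)
  | unit => intro _ _ _ hX _ _; cases hX
  | sort _ => intro _ _ _ hX _ _; cases hX
  | prod _ _ _ _ => intro _ _ _ hX _ _; cases hX
  | arr _ _ _ _ => intro _ _ _ hX _ _; cases hX

theorem subty_trans_both {S : Sig} {A B : Ty} (h : Subty S A B) :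
    (∀ C, Subty S B C → Subty S A C) ∧ (∀ C, Subty S C A → Subty S C B) := by
  induction h with
  | unit => exact ⟨fun _ h => h, fun _ h => h⟩
  | prod h1 h2 ih1 ih2 =>
      exact ⟨fun C hc => subty_prodL hc _ _ _ _ rfl ih1.1 ih2.1,
             fun C hc => subty_prodR hc _ _ _ _ rfl ih1.2 ih2.2⟩
  | sort hst =>
      exact ⟨fun C hc => subty_sortL hc _ _ rfl hst,
             fun C hc => subty_sortR hc _ _ rfl hst⟩
  | arr h1 h2 ih1 ih2 =>
      exact ⟨fun C hc => subty_arrL hc _ _ _ _ rfl ih1.2 ih2.1,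
             fun C hc => subty_arrR hc _ _ _ _ rfl ih1.1 ih2.2⟩
  | interL1 h1 ih =>
      exact ⟨fun C hc => .interL1 (ih.1 C hc),
             fun C hc => ih.2 C (interR_inv hc _ _ rfl).1⟩
  | interL2 h1 ih =>
      exact ⟨fun C hc => .interL2 (ih.1 C hc),
             fun C hc => ih.2 C (interR_inv hc _ _ rfl).2⟩
  | interR h1 h2 ih1 ih2 =>
      exact ⟨fun C hc => subty_interL hc _ _ _ rfl ih1.1 ih2.1,
             fun C hc => .interR (ih1.2 C hc) (ih2.2 C hc)⟩

theorem subty_trans {S : Sig} {A B C : Ty} (h1 : Subty S A B) (h2 : Subty S B C) :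
    Subty S A C :=
  (subty_trans_both h1).1 C h2

/-- The canonical-forms goal. -/
def InvGoal (Psi : UrSig) (Sgn : Sig) (v : Exp) (B : Ty) : Prop :=
  (∀ s, Subty Sgn B (.sort s) →
    ∃ c v' A t, v = .con c v' ∧ IsValue v' ∧ declaresCon Sgn c A t ∧
      Subsort Sgn t s ∧ HasType Psi Sgn [] v' A) ∧
  (∀ A1 A2, Subty Sgn B (.arr A1 A2) →
    ∃ x e B1, v = .lam x e ∧ Subty Sgn A1 B1 ∧
      HasType Psi Sgn [(x, B1)] e A2) ∧
  (Subty Sgn B .unit → v = .unit) ∧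
  (∀ A1 A2, Subty Sgn B (.prod A1 A2) →
    ∃ v1 v2, v = .pair v1 v2 ∧ HasType Psi Sgn [] v1 A1 ∧
      HasType Psi Sgn [] v2 A2)

theorem value_inversion_aux (Psi : UrSig) {Sgn : Sig} {G : Ctx} {v : Exp} {B : Ty}
    (ht : HasType Psi Sgn G v B) : G = [] → IsValue v → InvGoal Psi Sgn v B := by
  induction ht using HasType.rec
    (motive_2 := fun _ _ _ _ _ _ _ => True) with
  | var hx => intro hG _; subst hG; cases hx
  | sub _ hsub ih =>
      intro hG hv
      obtain ⟨g1, g2, g3, g4⟩ := ih hG hv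
      refine ⟨fun s h => g1 s (subty_trans hsub h),
              fun A1 A2 h => g2 A1 A2 (subty_trans hsub h),
              fun h => g3 (subty_trans hsub h),
              fun A1 A2 h => g4 A1 A2 (subty_trans hsub h)⟩
  | lam hb _ =>
      intro hG _
      subst hG
      refine ⟨fun s h => (by cases h), fun A1 A2 h => ?_, fun h => (by cases h),
              fun A1 A2 h => (by cases h)⟩
      cases h with
      | arr h1 h2 => exact ⟨_, _, _, rfl, h1, HasType.sub hb h2⟩
  | app _ _ _ _ => intro _ hv; cases hv
  | inter _ _ _ ih1 ih2 =>
      intro hG hv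
      refine ⟨fun s h => ?_, fun A1 A2 h => ?_, fun h => ?_, fun A1 A2 h => ?_⟩
      · cases h with
        | interL1 h => exact (ih1 hG hv).1 s h
        | interL2 h => exact (ih2 hG hv).1 s h
      · cases h with
        | interL1 h => exact (ih1 hG hv).2.1 A1 A2 h
        | interL2 h => exact (ih2 hG hv).2.1 A1 A2 h
      · cases h with
        | interL1 h => exact (ih1 hG hv).2.2.1 h
        | interL2 h => exact (ih2 hG hv).2.2.1 h
      · cases h with
        | interL1 h => exact (ih1 hG hv).2.2.2 A1 A2 h
        | interL2 h => exact (ih2 hG hv).2.2.2 A1 A2 h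
  | pair h1 h2 _ _ =>
      intro hG hv
      subst hG
      refine ⟨fun s h => (by cases h), fun A1 A2 h => (by cases h), fun h => (by cases h),
              fun A1 A2 h => ?_⟩
      cases h with
      | prod s1 s2 => exact ⟨_, _, rfl, HasType.sub h1 s1, HasType.sub h2 s2⟩
  | unit =>
      intro _ _
      exact ⟨fun s h => (by cases h), fun A1 A2 h => (by cases h), fun _ => rfl,
             fun A1 A2 h => (by cases h)⟩
  | dataI hcon hb _ =>
      intro hG hv
      subst hG
      refine ⟨fun s2 h => ?_, fun A1 A2 h => (by cases h), fun h => (by cases h),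
              fun A1 A2 h => (by cases h)⟩
      cases h with
      | sort hss2 =>
          obtain ⟨s'', hdecl, hsub⟩ := hcon
          cases hv with
          | con hv0 => exact ⟨_, _, _, s'', rfl, hv0, hdecl, hsub.trans hss2, hb⟩
  | dataE _ _ _ _ => intro _ hv; cases hv
  | declare _ _ _ _ => intro _ hv; cases hv
  | nil _ => trivial
  | cons _ _ _ _ _ _ _ _ _ => trivial

/-- **Inversion (canonical forms)** (Statement 9). -/
theorem value_inversion (Psi : UrSig) (Sgn : Sig) (v : Exp) (B : Ty)
    (hv : IsValue v) (ht : HasType Psi Sgn [] v B) :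
    (∀ s, Subty Sgn B (.sort s) →
      ∃ c v' A t, v = .con c v' ∧ IsValue v' ∧ declaresCon Sgn c A t ∧
        Subsort Sgn t s ∧ HasType Psi Sgn [] v' A) ∧
    (∀ A1 A2, Subty Sgn B (.arr A1 A2) →
      ∃ x e B1, v = .lam x e ∧ Subty Sgn A1 B1 ∧
        HasType Psi Sgn [(x, B1)] e A2) ∧
    (Subty Sgn B .unit → v = .unit) ∧
    (∀ A1 A2, Subty Sgn B (.prod A1 A2) →
      ∃ v1 v2, v = .pair v1 v2 ∧ HasType Psi Sgn [] v1 A1 ∧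
        HasType Psi Sgn [] v2 A2) :=
  value_inversion_aux Psi ht rfl hv
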